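/- arXiv:1707.08086 — 2 statements merged into one kernel-verified Lean document; each statement's English description precedes it below -/
import Mathlib

section
/- For every t ≥ 0, the standard Gaussian tail satisfies e^{−t²/2}/(√(2π)·(t + λ0)) ≤ Q(t) ≤ e^{−t²/2}/(2·λ0·t + 2) ≤ e^{−t²/2}. -/
open MeasureTheory ProbabilityTheory Real

/-- Standard Gaussian upper tail probability. -/
noncomputable def Q (t : ℝ) : ℝ := ((gaussianReal 0 1) (Set.Ioi t)).toReal

noncomputable def lam0 : ℝ := Real.sqrt (2 / Real.pi)

/-!
Let `φ` be the standard normal density. Since `exp (-t²/2) = √(2π) φ t` and `√(2π) = 2 / λ₀`,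
the claim reads `φ t / (t + λ₀) ≤ Q t ≤ φ t / (λ₀² t + λ₀)`. For `a ≥ 0` the gap
`millsGap a λ₀ t = φ t / (a t + λ₀) - Q t` vanishes at `0` (as `φ 0 / λ₀ = 1/2 = Q 0`) and
at `∞`, and its derivative is `φ t · p t / (a t + λ₀)²` with `p` a polynomial of degree at most
two. For `a = 1` and `a = λ₀²`, `p` changes sign exactly once on `(0, ∞)` (this is where
`3 < π < 4` enters), so the gap is unimodal on `[0, ∞)` and keeps a single sign there.
-/

open Set Filter Topology

local notation "φ" => gaussianPDFReal 0 1

section IntegralIoi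

variable {E : Type*} [NormedAddCommGroup E] [NormedSpace ℝ E] {f : ℝ → E}

lemma integral_Ioi_eq_sub_intervalIntegral (hf : Integrable f) (y : ℝ) :
    ∫ t in Ioi y, f t = (∫ t in Ioi 0, f t) - ∫ t in (0 : ℝ)..y, f t := by
  rw [← intervalIntegral.integral_Ioi_sub_Ioi' hf.integrableOn hf.integrableOn, sub_sub_cancel]

lemma hasDerivAt_integral_Ioi [CompleteSpace E] (hf : Integrable f) (hcont : Continuous f)
    (x : ℝ) :
    HasDerivAt (fun y ↦ ∫ t in Ioi y, f t) (-f x) x := by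
  have hprim := intervalIntegral.integral_hasDerivAt_right (a := 0) (b := x)
    hf.intervalIntegrable hcont.aestronglyMeasurable.stronglyMeasurableAtFilter hcont.continuousAt
  rw [funext (integral_Ioi_eq_sub_intervalIntegral hf), ← zero_sub]
  exact (hasDerivAt_const x _).sub hprim

lemma tendsto_integral_Ioi_atTop (hf : Integrable f) :
    Tendsto (fun y ↦ ∫ t in Ioi y, f t) atTop (𝓝 0) := by
  have hprim := intervalIntegral_tendsto_integral_Ioi 0 hf.integrableOn tendsto_id
  rw [funext (integral_Ioi_eq_sub_intervalIntegral hf), ← sub_self (∫ t in Ioi 0, f t)]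
  exact tendsto_const_nhds.sub hprim

end IntegralIoi

lemma gaussianPDFReal_zero_one (x : ℝ) : φ x = (√(2 * π))⁻¹ * exp (-x ^ 2 / 2) := by
  simp [gaussianPDFReal]

lemma continuous_gaussianPDFReal_zero_one : Continuous φ := by
  simp only [funext gaussianPDFReal_zero_one]; fun_prop

lemma hasDerivAt_gaussianPDFReal_zero_one (x : ℝ) : HasDerivAt φ (-x * φ x) x := by
  simp only [funext gaussianPDFReal_zero_one]
  have hexponent : HasDerivAt (fun y : ℝ ↦ -y ^ 2 / 2) (-x) x := by
    simpa [neg_div] using (hasDerivAt_pow 2 x).neg.div_const 2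
  exact (hexponent.exp.const_mul _).congr_deriv (by ring)

lemma tendsto_gaussianPDFReal_zero_one_atTop : Tendsto φ atTop (𝓝 0) := by
  have h : Tendsto (fun x : ℝ ↦ x ^ 2 / 2) atTop atTop :=
    (tendsto_pow_atTop two_ne_zero).atTop_div_const two_pos
  simpa [funext gaussianPDFReal_zero_one, neg_div] using
    (tendsto_exp_neg_atTop_nhds_zero.comp h).const_mul (√(2 * π))⁻¹

lemma Q_eq_integral (t : ℝ) : Q t = ∫ x in Ioi t, φ x := by
  rw [Q, gaussianReal_apply_eq_integral 0 one_ne_zero,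
    ENNReal.toReal_ofReal
      (setIntegral_nonneg measurableSet_Ioi fun x _ ↦ gaussianPDFReal_nonneg 0 1 x)]

lemma hasDerivAt_Q (x : ℝ) : HasDerivAt Q (-φ x) x := by
  simpa only [← funext Q_eq_integral] using
    hasDerivAt_integral_Ioi (integrable_gaussianPDFReal 0 1) continuous_gaussianPDFReal_zero_one x

lemma tendsto_Q_atTop : Tendsto Q atTop (𝓝 0) := by
  simpa only [← funext Q_eq_integral] using
    tendsto_integral_Ioi_atTop (integrable_gaussianPDFReal 0 1)

lemma Q_zero : Q 0 = 1 / 2 := by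
  have hint := integrable_gaussianPDFReal 0 1
  have hsymm : ∫ x in Iic 0, φ x = ∫ x in Ioi 0, φ x := by
    simpa [gaussianPDFReal_zero_one] using (integral_comp_neg_Ioi 0 φ).symm
  have htotal := intervalIntegral.integral_Iic_add_Ioi (b := 0) hint.integrableOn hint.integrableOn
  rw [integral_gaussianPDFReal_eq_one 0 one_ne_zero, hsymm] at htotal
  rw [Q_eq_integral]; linarith

lemma nonneg_of_hasDerivAt_of_sign_change {g g' : ℝ → ℝ} {a c t : ℝ} (hac : a ≤ c)
    (hderiv : ∀ x, a ≤ x → HasDerivAt g (g' x) x)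
    (hinc : ∀ x ∈ Ioo a c, 0 ≤ g' x) (hdec : ∀ x, c < x → g' x ≤ 0)
    (ha : 0 ≤ g a) (hlim : Tendsto g atTop (𝓝 0)) (ht : a ≤ t) : 0 ≤ g t := by
  have hcont : ContinuousOn g (Ici a) := fun x hx ↦
    (hderiv x hx).continuousAt.continuousWithinAt
  rcases le_total t c with htc | hct
  · have hmono : MonotoneOn g (Icc a c) := by
      refine monotoneOn_of_hasDerivWithinAt_nonneg (f' := g') (convex_Icc a c)
        (hcont.mono Icc_subset_Ici_self) (fun x hx ↦ ?_) (fun x hx ↦ ?_) <;>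
        rw [interior_Icc] at hx
      exacts [(hderiv x hx.1.le).hasDerivWithinAt, hinc x hx]
    exact ha.trans (hmono ⟨le_rfl, hac⟩ ⟨ht, htc⟩ ht)
  · have hanti : AntitoneOn g (Ici c) := by
      refine antitoneOn_of_hasDerivWithinAt_nonpos (f' := g') (convex_Ici c)
        (hcont.mono (Ici_subset_Ici.2 hac)) (fun x hx ↦ ?_) (fun x hx ↦ ?_) <;>
        rw [interior_Ici] at hx
      exacts [(hderiv x (hac.trans hx.out.le)).hasDerivWithinAt, hdec x hx]
    exact le_of_tendsto hlim (eventually_atTop.2 ⟨t, fun y hy ↦ hanti hct (hct.trans hy) hy⟩)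

lemma lam0_pos : 0 < lam0 := sqrt_pos.2 (by positivity)

lemma lam0_sq : lam0 ^ 2 = 2 / π := sq_sqrt (by positivity)

lemma lam0_sq_lt_one : lam0 ^ 2 < 1 := by
  rw [lam0_sq, div_lt_one pi_pos]; linarith [pi_gt_three]

lemma one_lt_two_mul_lam0_sq : 1 < 2 * lam0 ^ 2 := by
  rw [lam0_sq, mul_div_assoc', lt_div_iff₀ pi_pos]; linarith [pi_lt_four]

lemma sqrt_two_pi_eq : √(2 * π) = 2 / lam0 := by
  rw [eq_div_iff lam0_pos.ne', lam0, ← sqrt_mul (by positivity),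
    show 2 * π * (2 / π) = 2 ^ 2 by field_simp, sqrt_sq zero_le_two]

lemma exp_neg_sq_div_two_eq (x : ℝ) : exp (-x ^ 2 / 2) = √(2 * π) * φ x := by
  rw [gaussianPDFReal_zero_one, mul_inv_cancel_left₀ (by positivity)]

lemma gaussianPDFReal_zero_one_zero : φ 0 = lam0 / 2 := by
  rw [gaussianPDFReal_zero_one, sqrt_two_pi_eq]; simp

noncomputable def millsGap (a b x : ℝ) : ℝ := φ x / (a * x + b) - Q x

lemma hasDerivAt_millsGap {a b x : ℝ} (hx : a * x + b ≠ 0) :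
    HasDerivAt (millsGap a b)
      (φ x * ((a ^ 2 - a) * x ^ 2 + (2 * a * b - b) * x + (b ^ 2 - a)) / (a * x + b) ^ 2) x := by
  have hlin : HasDerivAt (fun y ↦ a * y + b) a x := by
    simpa using ((hasDerivAt_id x).const_mul a).add_const b
  refine (((hasDerivAt_gaussianPDFReal_zero_one x).div hlin hx).sub (hasDerivAt_Q x)).congr_deriv ?_
  rw [eq_div_iff (pow_ne_zero 2 hx), sub_mul, div_mul_cancel₀ _ (pow_ne_zero 2 hx)]
  ring

lemma tendsto_millsGap_atTop {a b : ℝ} (ha : 0 ≤ a) (hb : 0 < b) :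
    Tendsto (millsGap a b) atTop (𝓝 0) := by
  have hdiv : Tendsto (fun y ↦ φ y / (a * y + b)) atTop (𝓝 0) := by
    refine squeeze_zero' ?_ ?_ (by simpa using tendsto_gaussianPDFReal_zero_one_atTop.div_const b)
    all_goals filter_upwards [eventually_ge_atTop 0] with y hy
    · exact div_nonneg (gaussianPDFReal_nonneg 0 1 y) (by positivity)
    · exact div_le_div_of_nonneg_left (gaussianPDFReal_nonneg 0 1 y) hb (by nlinarith)
  rw [← sub_zero (0 : ℝ)]
  exact hdiv.sub tendsto_Q_atTop

lemma millsGap_zero (a : ℝ) : millsGap a lam0 0 = 0 := by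
  rw [millsGap, gaussianPDFReal_zero_one_zero, Q_zero, mul_zero, zero_add, div_div,
    mul_comm, ← div_div, div_self lam0_pos.ne']
  norm_num

lemma gaussianPDFReal_div_le_Q {t : ℝ} (ht : 0 ≤ t) : φ t / (t + lam0) ≤ Q t := by
  set c := (1 - lam0 ^ 2) / lam0
  have hlc : lam0 * c = 1 - lam0 ^ 2 := mul_div_cancel₀ _ lam0_pos.ne'
  have hc : 0 ≤ c := div_nonneg (by linarith [lam0_sq_lt_one]) lam0_pos.le
  have key := nonneg_of_hasDerivAt_of_sign_change (g := fun x ↦ -millsGap 1 lam0 x) hc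
    (fun x hx ↦ (hasDerivAt_millsGap (by linarith [lam0_pos])).neg) ?_ ?_
    (by simp [millsGap_zero]) (by simpa using (tendsto_millsGap_atTop zero_le_one lam0_pos).neg) ht
  · simpa [millsGap] using key
  · intro x hx
    rw [neg_nonneg]
    refine div_nonpos_of_nonpos_of_nonneg (mul_nonpos_of_nonneg_of_nonpos
      (gaussianPDFReal_nonneg 0 1 x) ?_) (sq_nonneg _)
    nlinarith [hx.2, lam0_pos]
  · intro x hx
    rw [neg_nonpos]
    refine div_nonneg (mul_nonneg (gaussianPDFReal_nonneg 0 1 x) ?_) (sq_nonneg _)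
    nlinarith [lam0_pos]

lemma Q_le_gaussianPDFReal_div {t : ℝ} (ht : 0 ≤ t) : Q t ≤ φ t / (lam0 ^ 2 * t + lam0) := by
  set c := (2 * lam0 ^ 2 - 1) / (lam0 * (1 - lam0 ^ 2))
  have hden : 0 < lam0 * (1 - lam0 ^ 2) := mul_pos lam0_pos (by linarith [lam0_sq_lt_one])
  have hc : 0 ≤ c := div_nonneg (by linarith [one_lt_two_mul_lam0_sq]) hden.le
  have hdc : lam0 * (1 - lam0 ^ 2) * c = 2 * lam0 ^ 2 - 1 := mul_div_cancel₀ _ hden.ne'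
  have hpoly : ∀ x, ((lam0 ^ 2) ^ 2 - lam0 ^ 2) * x ^ 2 + (2 * lam0 ^ 2 * lam0 - lam0) * x
      + (lam0 ^ 2 - lam0 ^ 2) = lam0 * x * (lam0 * (1 - lam0 ^ 2)) * (c - x) := fun x ↦ by
    linear_combination (-(lam0 * x)) * hdc
  have key := nonneg_of_hasDerivAt_of_sign_change (g := millsGap (lam0 ^ 2) lam0) hc
    (fun x hx ↦ hasDerivAt_millsGap (by nlinarith [lam0_pos])) ?_ ?_
    (millsGap_zero _).ge (tendsto_millsGap_atTop (sq_nonneg _) lam0_pos) ht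
  · simpa [millsGap] using key
  · intro x hx
    rw [hpoly]
    have hx0 : 0 ≤ lam0 * x * (lam0 * (1 - lam0 ^ 2)) :=
      mul_nonneg (mul_nonneg lam0_pos.le hx.1.le) hden.le
    exact div_nonneg (mul_nonneg (gaussianPDFReal_nonneg 0 1 x)
      (mul_nonneg hx0 (sub_nonneg.2 hx.2.le))) (sq_nonneg _)
  · intro x hx
    rw [hpoly]
    have hx0 : 0 ≤ lam0 * x * (lam0 * (1 - lam0 ^ 2)) :=
      mul_nonneg (mul_nonneg lam0_pos.le (hc.trans hx.le)) hden.le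
    exact div_nonpos_of_nonpos_of_nonneg (mul_nonpos_of_nonneg_of_nonpos
      (gaussianPDFReal_nonneg 0 1 x) (mul_nonpos_of_nonneg_of_nonpos hx0 (by linarith)))
      (sq_nonneg _)

theorem Q_tail_bounds (t : ℝ) (ht : 0 ≤ t) :
    Real.exp (-t ^ 2 / 2) / (Real.sqrt (2 * Real.pi) * (t + lam0)) ≤ Q t ∧
    Q t ≤ Real.exp (-t ^ 2 / 2) / (2 * lam0 * t + 2) ∧
    Real.exp (-t ^ 2 / 2) / (2 * lam0 * t + 2) ≤ Real.exp (-t ^ 2 / 2) := by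
  have hlower : exp (-t ^ 2 / 2) / (√(2 * π) * (t + lam0)) = φ t / (t + lam0) := by
    rw [exp_neg_sq_div_two_eq, mul_div_mul_left _ _ (by positivity)]
  have hupper : exp (-t ^ 2 / 2) / (2 * lam0 * t + 2) = φ t / (lam0 ^ 2 * t + lam0) := by
    rw [exp_neg_sq_div_two_eq, sqrt_two_pi_eq]
    field_simp
  refine ⟨hlower ▸ gaussianPDFReal_div_le_Q ht, hupper ▸ Q_le_gaussianPDFReal_div ht, ?_⟩
  exact div_le_self (exp_nonneg _) (by nlinarith [lam0_pos])
end

section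
/- (Binomial tail lower bound in terms of the Gaussian tail.) There exists a constant c > 0 such that for every integer n ≥ 2 and every real t with 0 ≤ t ≤ n^{1/4}, if X is uniformly distributed on {0,1}^n and r = ⌊n/2 − t·√n/2⌋, then P(wt(X) ≤ r) ≥ c·Q(t)/√n. -/
/-!
Write `h = ⌊n/2⌋` and `k = h - j` for the threshold, so that `j ≲ t√n/2 + 1`; the tail is at
least `C(n, k) / 2ⁿ`. Each step down from the centre multiplies the binomial coefficient by
`(h - i) / (n - h + i + 1) ≥ (1 - z) / (1 + z) ≥ exp (-2z - 3z³)` with `z = (i + 1) / (h + 1)`,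
so `C(n, h - j) ≥ C(n, h) · exp (-j(j+1)/(h+1) - 3j⁴/(h+1)³)`. The cubic term is what makes the
range `t ≤ n^{1/4}` work: with `u = n^{1/4}`, `j ≤ u³/2 + 1` and `h + 1 ≥ u⁴/2`, the exponent is
`t²/2 + O(1)`. Together with `C(n, h) ≥ 2ⁿ/(4√n)` and `Q(t) ≤ exp (-t²/2)` this gives the bound
for large `n`; for the finitely many remaining `n` the tail contains the zero string.
-/

open MeasureTheory ProbabilityTheory Real
open scoped Classical

def wt {n : ℕ} (x : Fin n → Bool) : ℕ := (Finset.univ.filter fun i => x i = true).card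

open Finset

lemma Q_nonneg (t : ℝ) : 0 ≤ Q t := ENNReal.toReal_nonneg

lemma Q_le_one (t : ℝ) : Q t ≤ 1 :=
  ENNReal.toReal_le_of_le_ofReal zero_le_one (by simpa using prob_le_one)

lemma Q_le_exp_neg_sq_div_two {t : ℝ} (ht : 0 ≤ t) : Q t ≤ exp (-(t ^ 2 / 2)) := by
  -- On `(t, ∞)` the density of `N(0,1)` is at most `exp (-t²/2)` times that of `N(t,1)`.
  have hpdf : ∀ x ∈ Set.Ioi t,
      gaussianPDFReal 0 1 x ≤ exp (-(t ^ 2 / 2)) * gaussianPDFReal t 1 x := by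
    intro x hx
    have hexp : exp (-x ^ 2 / 2) ≤ exp (-(t ^ 2 / 2)) * exp (-(x - t) ^ 2 / 2) := by
      rw [← exp_add, exp_le_exp]
      nlinarith [mul_nonneg ht (sub_nonneg.2 (le_of_lt hx))]
    simp only [gaussianPDFReal, NNReal.coe_one, mul_one, sub_zero]
    rw [mul_left_comm]
    gcongr
  calc Q t = ∫ x in Set.Ioi t, gaussianPDFReal 0 1 x := by
        rw [Q, gaussianReal_apply_eq_integral 0 one_ne_zero, ENNReal.toReal_ofReal]
        exact setIntegral_nonneg measurableSet_Ioi fun x _ => gaussianPDFReal_nonneg _ _ _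
    _ ≤ ∫ x in Set.Ioi t, exp (-(t ^ 2 / 2)) * gaussianPDFReal t 1 x :=
        setIntegral_mono_on (integrable_gaussianPDFReal 0 1).restrict
          ((integrable_gaussianPDFReal t 1).const_mul _).restrict measurableSet_Ioi hpdf
    _ = exp (-(t ^ 2 / 2)) * ∫ x in Set.Ioi t, gaussianPDFReal t 1 x := integral_const_mul _ _
    _ ≤ exp (-(t ^ 2 / 2)) * ∫ x, gaussianPDFReal t 1 x :=
        mul_le_mul_of_nonneg_left (setIntegral_le_integral (integrable_gaussianPDFReal t 1)
          (ae_of_all _ (gaussianPDFReal_nonneg _ _))) (exp_nonneg _)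
    _ = exp (-(t ^ 2 / 2)) := by rw [integral_gaussianPDFReal_eq_one t one_ne_zero, mul_one]

lemma card_filter_wt_eq (n k : ℕ) :
    (univ.filter fun x : Fin n → Bool => wt x = k).card = n.choose k := by
  rw [← card_fin n, ← card_powersetCard, card_fin]
  refine card_nbij' (fun x => univ.filter fun i => x i = true) (fun s i => decide (i ∈ s))
    ?_ ?_ ?_ ?_
  · intro x hx
    simpa [wt] using mem_filter.1 (mem_coe.1 hx)
  · intro s hs
    refine mem_coe.2 (mem_filter.2 ⟨mem_univ _, ?_⟩)
    simpa [wt] using hs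
  · intro x _
    funext i
    simp
  · intro s _
    ext i
    simp

lemma choose_le_card_wt_le {n k : ℕ} {r : ℤ} (hk : (k : ℤ) ≤ r) :
    n.choose k ≤ (univ.filter fun x : Fin n → Bool => (wt x : ℤ) ≤ r).card := by
  rw [← card_filter_wt_eq]
  refine card_le_card fun x hx => ?_
  simp only [mem_filter, mem_univ, true_and] at hx ⊢
  rw [hx]
  exact hk

lemma sixteen_pow_le_four_mul_centralBinom_sq {m : ℕ} (hm : 1 ≤ m) :
    16 ^ m ≤ 4 * m * m.centralBinom ^ 2 := by
  induction m, hm using Nat.le_induction with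
  | base => simp [Nat.centralBinom]
  | succ m hm ih =>
    have hrec := Nat.succ_mul_centralBinom_succ m
    refine Nat.le_of_mul_le_mul_left (c := (m + 1) ^ 2) ?_ (by positivity)
    calc (m + 1) ^ 2 * 16 ^ (m + 1) = 16 * (m + 1) ^ 2 * 16 ^ m := by ring
      _ ≤ 16 * (m + 1) ^ 2 * (4 * m * m.centralBinom ^ 2) := by gcongr
      _ = 4 * m * (m + 1) * (16 * (m + 1) * m.centralBinom ^ 2) := by ring
      _ ≤ (2 * m + 1) ^ 2 * (16 * (m + 1) * m.centralBinom ^ 2) := by gcongr; nlinarith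
      _ = 4 * (m + 1) * (2 * (2 * m + 1) * m.centralBinom) ^ 2 := by ring
      _ = (m + 1) ^ 2 * (4 * (m + 1) * (m + 1).centralBinom ^ 2) := by rw [← hrec]; ring

lemma two_pow_le_four_mul_sqrt_mul_choose_half {n : ℕ} (hn : 2 ≤ n) :
    (2 : ℝ) ^ n ≤ 4 * √n * n.choose (n / 2) := by
  set m := n / 2
  have hcentral : (4 : ℝ) ^ m ≤ 2 * √m * m.centralBinom := by
    refine (pow_le_pow_iff_left₀ (by positivity) (by positivity) two_ne_zero).1 ?_
    calc ((4 : ℝ) ^ m) ^ 2 = 16 ^ m := by rw [← pow_mul, mul_comm, pow_mul]; norm_num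
      _ ≤ 4 * m * m.centralBinom ^ 2 := by
          exact_mod_cast sixteen_pow_le_four_mul_centralBinom_sq (by omega)
      _ = (2 * √m * m.centralBinom) ^ 2 := by
          rw [mul_pow, mul_pow, sq_sqrt (Nat.cast_nonneg m)]; ring
  have hchoose : (m.centralBinom : ℝ) ≤ n.choose m := by
    rw [Nat.centralBinom]
    exact_mod_cast Nat.choose_le_choose m (by omega)
  calc (2 : ℝ) ^ n ≤ 2 ^ (2 * m + 1) := pow_le_pow_right₀ one_le_two (by omega)
    _ = 2 * 4 ^ m := by rw [pow_succ, pow_mul]; norm_num; ring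
    _ ≤ 2 * (2 * √m * m.centralBinom) := by gcongr
    _ ≤ 4 * √n * n.choose m := by
        rw [← mul_assoc, ← mul_assoc]
        gcongr
        · norm_num
        · exact Nat.div_le_self n 2

lemma exp_neg_le_one_sub_div_one_add {z : ℝ} (h0 : 0 ≤ z) (h5 : z ≤ 1 / 5) :
    exp (-(2 * z + 3 * z ^ 3)) ≤ (1 - z) / (1 + z) := by
  set w := 2 * z + 3 * z ^ 3
  have hw : 0 ≤ w := by positivity
  calc exp (-w) = (exp w)⁻¹ := exp_neg w
    _ ≤ (1 + w + w ^ 2 / 2)⁻¹ := inv_anti₀ (by positivity) (quadratic_le_exp_of_nonneg hw)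
    _ ≤ (1 - z) / (1 + z) := by
        rw [inv_eq_one_div, div_le_div_iff₀ (by positivity) (by linarith)]
        nlinarith [pow_nonneg h0 3, pow_nonneg h0 4, pow_nonneg h0 5, pow_nonneg h0 6,
          pow_nonneg h0 7]

lemma choose_succ_mul_div_eq_choose {n m : ℕ} (hm : m < n) :
    (n.choose (m + 1) : ℝ) * ((m + 1) / (n - m)) = n.choose m := by
  have hnm : (0 : ℝ) < n - m := sub_pos.2 (by exact_mod_cast hm)
  have h := congrArg (Nat.cast : ℕ → ℝ) (Nat.choose_succ_right_eq n m)
  push_cast [hm.le] at h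
  rw [mul_div_assoc', div_eq_iff hnm.ne', h]

-- Dominates `∑ i < j, (2 zᵢ + 3 zᵢ³)` with `zᵢ = (i + 1) / (h + 1)`, which bounds the drop of
-- `log (n.choose ·)` over the `j` steps down from `h`.
noncomputable def centralDecay (h j : ℕ) : ℝ :=
  j * (j + 1) / (h + 1) + 3 * j ^ 4 / (h + 1) ^ 3

lemma centralDecay_succ (h j : ℕ) :
    centralDecay h j + (2 * ((j + 1) / (h + 1)) + 3 * ((j + 1) / (h + 1)) ^ 3 : ℝ)
      ≤ centralDecay h (j + 1) := by
  have hdiff : centralDecay h (j + 1)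
      - (centralDecay h j + (2 * ((j + 1) / (h + 1)) + 3 * ((j + 1) / (h + 1)) ^ 3 : ℝ))
      = 3 * (3 * j ^ 3 + 3 * j ^ 2 + j) / (h + 1) ^ 3 := by
    simp only [centralDecay]
    push_cast
    field_simp
    ring
  have : 0 ≤ 3 * (3 * (j : ℝ) ^ 3 + 3 * j ^ 2 + j) / (h + 1) ^ 3 := by positivity
  linarith

lemma choose_mul_exp_le_choose_sub {n h j : ℕ} (hh : h ≤ n) (hn : n ≤ 2 * h + 1)
    (hj : 5 * j ≤ h + 1) : (n.choose h : ℝ) * exp (-centralDecay h j) ≤ n.choose (h - j) := by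
  induction j with
  | zero => simp [centralDecay]
  | succ j ih =>
    set z : ℝ := (j + 1) / (h + 1)
    have hz : 0 ≤ z := by positivity
    have hz5 : z ≤ 1 / 5 := by
      rw [div_le_iff₀ (by positivity)]
      have : (5 * (j + 1) : ℝ) ≤ h + 1 := by exact_mod_cast hj
      linarith
    have hstep : (n.choose (h - j) : ℝ) * ((1 - z) / (1 + z)) ≤ n.choose (h - (j + 1)) := by
      have hjh : j + 1 ≤ h := by omega
      have hratio : (1 - z) / (1 + z) = (h - j) / (h + j + 2) := by
        simp only [z]
        field_simp
        ring
      have hm : ((h - (j + 1) : ℕ) : ℝ) + 1 = h - j := by push_cast [hjh]; ring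
      have hn' : (n : ℝ) ≤ 2 * h + 1 := by exact_mod_cast hn
      rw [← choose_succ_mul_div_eq_choose (n := n) (m := h - (j + 1)) (by omega),
        show h - (j + 1) + 1 = h - j by omega, hratio, hm]
      refine mul_le_mul_of_nonneg_left (div_le_div_of_nonneg_left ?_ ?_ ?_) (Nat.cast_nonneg _)
      · exact sub_nonneg.2 (by exact_mod_cast (by omega : j ≤ h))
      · have : (h : ℝ) ≤ n := by exact_mod_cast hh
        push_cast [hjh]
        linarith
      · push_cast [hjh]
        linarith
    calc (n.choose h : ℝ) * exp (-centralDecay h (j + 1))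
        ≤ n.choose h * exp (-centralDecay h j) * exp (-(2 * z + 3 * z ^ 3)) := by
          rw [mul_assoc, ← exp_add]
          gcongr
          linarith [centralDecay_succ h j]
      _ ≤ n.choose (h - j) * ((1 - z) / (1 + z)) := by
          gcongr
          · exact ih (by omega)
          · exact exp_neg_le_one_sub_div_one_add hz hz5
      _ ≤ n.choose (h - (j + 1)) := hstep

lemma centralDecay_le {h j : ℕ} {t u : ℝ} (hu : 2 ≤ u) (ht : 0 ≤ t) (htu : t ≤ u)
    (hj : (j : ℝ) ≤ t * u ^ 2 / 2 + 1) (hh : u ^ 4 / 2 ≤ h + 1) :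
    centralDecay h j ≤ t ^ 2 / 2 + 31 := by
  have ha : (0 : ℝ) < h + 1 := by positivity
  have hj0 : (0 : ℝ) ≤ j := j.cast_nonneg
  have hquad : (j : ℝ) * (j + 1) / (h + 1) ≤ t ^ 2 / 2 + 7 := by
    rw [div_le_iff₀ ha]
    have htu2 : t * u ^ 2 ≤ u ^ 3 := by nlinarith
    have : (j : ℝ) * (j + 1) ≤ (t * u ^ 2 / 2 + 1) * (t * u ^ 2 / 2 + 2) :=
      mul_le_mul hj (by linarith) (by positivity) (by positivity)
    nlinarith [pow_le_pow_right₀ (by linarith : (1 : ℝ) ≤ u) (by norm_num : 3 ≤ 4)]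
  have hquart : 3 * (j : ℝ) ^ 4 / (h + 1) ^ 3 ≤ 24 := by
    rw [div_le_iff₀ (by positivity)]
    have hju : (j : ℝ) ≤ u ^ 3 := by nlinarith
    calc 3 * (j : ℝ) ^ 4 ≤ 3 * (u ^ 3) ^ 4 := by gcongr
      _ = 24 * (u ^ 4 / 2) ^ 3 := by ring
      _ ≤ 24 * (h + 1) ^ 3 := by gcongr
  unfold centralDecay
  linarith

lemma choose_half_mul_exp_le_choose_half_sub {n j : ℕ} {t u : ℝ} (hn : (n : ℝ) = u ^ 4)
    (hu : 16 ≤ u) (ht : 0 ≤ t) (htu : t ≤ u) (hj : (j : ℝ) ≤ t * u ^ 2 / 2 + 1) :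
    (n.choose (n / 2) : ℝ) * exp (-(t ^ 2 / 2 + 31)) ≤ n.choose (n / 2 - j) := by
  have hh : (u ^ 4 / 2 : ℝ) ≤ (n / 2 : ℕ) + 1 := by
    rw [← hn, div_le_iff₀ two_pos]
    exact_mod_cast (by omega : n ≤ (n / 2 + 1) * 2)
  have hj5 : 5 * j ≤ n / 2 + 1 := by
    have : (5 * j : ℝ) ≤ (n / 2 : ℕ) + 1 := by
      nlinarith [pow_le_pow_right₀ (by linarith : (1 : ℝ) ≤ u) (by norm_num : 2 ≤ 3)]
    exact_mod_cast this
  calc (n.choose (n / 2) : ℝ) * exp (-(t ^ 2 / 2 + 31))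
      ≤ n.choose (n / 2) * exp (-centralDecay (n / 2) j) := by
        gcongr
        exact centralDecay_le (by linarith) ht htu hj hh
    _ ≤ n.choose (n / 2 - j) :=
        choose_mul_exp_le_choose_sub (Nat.div_le_self n 2) (by omega) hj5

lemma sqrt_eq_sq_of_eq_pow_four {x u : ℝ} (h : x = u ^ 4) : √x = u ^ 2 := by
  rw [h, show u ^ 4 = (u ^ 2) ^ 2 by ring, sqrt_sq (sq_nonneg u)]

lemma floor_half_sub_nonneg {n : ℕ} {t u : ℝ} (hn : (n : ℝ) = u ^ 4) (hu : 1 ≤ u)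
    (htu : t ≤ u) : 0 ≤ ⌊(n : ℝ) / 2 - t * u ^ 2 / 2⌋ := by
  refine Int.floor_nonneg.2 ?_
  rw [hn]
  nlinarith [pow_le_pow_right₀ hu (by norm_num : 3 ≤ 4),
    mul_le_mul_of_nonneg_right htu (sq_nonneg u)]

lemma tail_lower_bound_of_sixteen_le {n : ℕ} {t u : ℝ} (hn : (n : ℝ) = u ^ 4) (hu : 16 ≤ u)
    (ht : 0 ≤ t) (htu : t ≤ u) :
    exp (-31) / 4 * Q t / u ^ 2 ≤
      ((univ.filter fun x : Fin n → Bool =>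
        (wt x : ℤ) ≤ ⌊(n : ℝ) / 2 - t * u ^ 2 / 2⌋).card : ℝ) / 2 ^ n := by
  set r := ⌊(n : ℝ) / 2 - t * u ^ 2 / 2⌋
  have hr : 0 ≤ r := floor_half_sub_nonneg hn (by linarith) htu
  obtain ⟨k, hk⟩ := Int.eq_ofNat_of_zero_le hr
  have hk_le : (k : ℝ) ≤ n / 2 - t * u ^ 2 / 2 := by
    have : (r : ℝ) ≤ n / 2 - t * u ^ 2 / 2 := Int.floor_le _
    rwa [hk, Int.cast_natCast] at this
  have hk_gt : (n : ℝ) / 2 - t * u ^ 2 / 2 - 1 < k := by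
    have : (n : ℝ) / 2 - t * u ^ 2 / 2 < r + 1 := Int.lt_floor_add_one _
    rw [hk, Int.cast_natCast] at this
    linarith
  have hkh : k ≤ n / 2 := by
    rw [Nat.le_div_iff_mul_le two_pos]
    have : (k : ℝ) * 2 ≤ n := by nlinarith
    exact_mod_cast this
  have hj : ((n / 2 - k : ℕ) : ℝ) ≤ t * u ^ 2 / 2 + 1 := by
    rw [Nat.cast_sub hkh]
    have := Nat.cast_div_le (α := ℝ) (m := n) (n := 2)
    push_cast at this
    linarith
  have hn2 : (2 : ℝ) ≤ n := by
    rw [hn]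
    nlinarith [pow_le_pow_left₀ (by norm_num) hu 4]
  have hcentral := two_pow_le_four_mul_sqrt_mul_choose_half (n := n) (by exact_mod_cast hn2)
  rw [sqrt_eq_sq_of_eq_pow_four hn] at hcentral
  have hchoose := choose_half_mul_exp_le_choose_half_sub hn hu ht htu hj
  rw [Nat.sub_sub_self hkh] at hchoose
  have hcard : (n.choose k : ℝ) ≤ ((univ.filter fun x : Fin n → Bool =>
        (wt x : ℤ) ≤ r).card : ℝ) := by exact_mod_cast choose_le_card_wt_le hk.ge
  rw [div_le_div_iff₀ (by positivity) (by positivity)]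
  calc exp (-31) / 4 * Q t * 2 ^ n
      ≤ exp (-31) / 4 * exp (-(t ^ 2 / 2)) * (4 * u ^ 2 * n.choose (n / 2)) := by
        gcongr
        exact Q_le_exp_neg_sq_div_two ht
    _ = u ^ 2 * (n.choose (n / 2) * exp (-(t ^ 2 / 2 + 31))) := by
        rw [neg_add, exp_add]; ring
    _ ≤ _ := by
        rw [mul_comm _ (u ^ 2)]
        gcongr
        exact hchoose.trans hcard

lemma tail_lower_bound_of_lt_sixteen {n : ℕ} {t u : ℝ} (hn : (n : ℝ) = u ^ 4) (hu1 : 1 ≤ u)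
    (hu : u < 16) (htu : t ≤ u) :
    (2 ^ 65536)⁻¹ * Q t / u ^ 2 ≤
      ((univ.filter fun x : Fin n → Bool =>
        (wt x : ℤ) ≤ ⌊(n : ℝ) / 2 - t * u ^ 2 / 2⌋).card : ℝ) / 2 ^ n := by
  have hn_small : n ≤ 65536 := by
    have : (n : ℝ) ≤ 65536 := by
      rw [hn]
      nlinarith [pow_le_pow_left₀ (by linarith) hu.le 4]
    exact_mod_cast this
  -- the zero string lies in the tail
  have hzero := choose_le_card_wt_le (n := n) (k := 0) (floor_half_sub_nonneg hn hu1 htu)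
  rw [Nat.choose_zero_right] at hzero
  calc (2 ^ 65536)⁻¹ * Q t / u ^ 2 ≤ (2 ^ 65536)⁻¹ * 1 / 1 := by
        gcongr
        · exact Q_le_one t
        · exact one_le_pow₀ hu1
    _ ≤ 1 / 2 ^ n := by
        rw [mul_one, div_one, inv_eq_one_div]
        gcongr
        norm_num
    _ ≤ _ := by
        gcongr
        exact_mod_cast hzero

theorem binomial_tail_lower_bound :
    ∃ c : ℝ, 0 < c ∧ ∀ n : ℕ, 2 ≤ n → ∀ t : ℝ, 0 ≤ t → t ≤ (n : ℝ) ^ ((1 : ℝ) / 4) →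
      c * Q t / Real.sqrt n ≤
        ((Finset.univ.filter fun x : Fin n → Bool =>
            (wt x : ℤ) ≤ ⌊(n : ℝ) / 2 - t * Real.sqrt n / 2⌋).card : ℝ) / 2 ^ n := by
  refine ⟨min (2 ^ 65536)⁻¹ (exp (-31) / 4), by positivity, fun n hn t ht htu => ?_⟩
  set u := (n : ℝ) ^ ((1 : ℝ) / 4)
  have hn_eq : (n : ℝ) = u ^ 4 := by
    rw [← rpow_natCast, ← rpow_mul n.cast_nonneg]
    norm_num
  have hu1 : 1 ≤ u := one_le_rpow (by exact_mod_cast (by omega : 1 ≤ n)) (by norm_num)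
  rw [sqrt_eq_sq_of_eq_pow_four hn_eq]
  by_cases hu : 16 ≤ u
  · calc _ ≤ exp (-31) / 4 * Q t / u ^ 2 := by
          gcongr
          exacts [Q_nonneg t, min_le_right _ _]
      _ ≤ _ := tail_lower_bound_of_sixteen_le hn_eq hu ht htu
  · calc _ ≤ (2 ^ 65536)⁻¹ * Q t / u ^ 2 := by
          gcongr
          exacts [Q_nonneg t, min_le_left _ _]
      _ ≤ _ := tail_lower_bound_of_lt_sixteen hn_eq hu1 (not_le.1 hu) htu
end
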